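/- Let E be a finite-dimensional real inner product space, τ > 0 and z ∈ E. Then the infimum over w ∈ E of (1/2)·‖w − z‖² + τ·‖w‖ equals (1/2)·‖z‖² if ‖z‖ ≤ τ, and equals τ·‖z‖ − τ²/2 if ‖z‖ > τ. -/

import Mathlib

/-! The objective is bounded below by its value `(1/2)(t - ‖z‖)² + τ t` at `t = ‖w‖` (reverse
triangle inequality), a scalar quadratic whose minimum over `t ≥ 0`, attained at
`t = max (‖z‖ - τ) 0`, is the Huber function of `‖z‖`. Block soft-thresholding
`max (1 - τ / ‖z‖) 0 • z` is a vector of exactly that norm pointing along `z`, where the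
reverse triangle inequality is an equality. -/

/-- The Huber function with threshold `τ`, written for arguments `r ≥ 0`. -/
noncomputable def huber (τ r : ℝ) : ℝ :=
  if r ≤ τ then 1 / 2 * r ^ 2 else τ * r - τ ^ 2 / 2

/-- The block soft-thresholding operator, i.e. the proximal map of `τ ‖·‖`. At `‖z‖ = 0` the
junk value `τ / 0 = 0` is harmless: the result has norm `0` anyway. -/
noncomputable def blockSoftThresh {E : Type*} [SeminormedAddCommGroup E] [NormedSpace ℝ E]
    (τ : ℝ) (z : E) : E :=
  max (1 - τ / ‖z‖) 0 • z

theorem huber_le_half_sq_sub_add_mul (τ r : ℝ) {t : ℝ} (ht : 0 ≤ t) :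
    huber τ r ≤ 1 / 2 * (t - r) ^ 2 + τ * t := by
  unfold huber
  split_ifs with h
  · nlinarith
  · nlinarith [sq_nonneg (t - r + τ)]

theorem half_sq_sub_add_mul_max_sub_eq_huber (τ r : ℝ) :
    1 / 2 * (max (r - τ) 0 - r) ^ 2 + τ * max (r - τ) 0 = huber τ r := by
  unfold huber
  split_ifs with h
  · rw [max_eq_right (by linarith)]
    ring
  · rw [max_eq_left (by linarith)]
    ring

theorem max_one_sub_div_mul_self {τ r : ℝ} (hτ : 0 ≤ τ) (hr : 0 ≤ r) :
    max (1 - τ / r) 0 * r = max (r - τ) 0 := by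
  rcases hr.eq_or_lt with rfl | hr
  · simp [hτ]
  · rw [max_mul_of_nonneg _ _ hr.le, sub_mul, div_mul_cancel₀ _ hr.ne', one_mul, zero_mul]

theorem sq_norm_sub_norm_le_sq_norm_sub {E : Type*} [SeminormedAddCommGroup E] (w z : E) :
    (‖w‖ - ‖z‖) ^ 2 ≤ ‖w - z‖ ^ 2 :=
  sq_le_sq.mpr ((abs_norm_sub_norm_le w z).trans (le_abs_self _))

theorem huber_le_half_sq_norm_sub_add_mul_norm {E : Type*} [SeminormedAddCommGroup E] (τ : ℝ)
    (w z : E) :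
    huber τ ‖z‖ ≤ 1 / 2 * ‖w - z‖ ^ 2 + τ * ‖w‖ :=
  calc huber τ ‖z‖ ≤ 1 / 2 * (‖w‖ - ‖z‖) ^ 2 + τ * ‖w‖ :=
        huber_le_half_sq_sub_add_mul τ ‖z‖ (norm_nonneg w)
    _ ≤ 1 / 2 * ‖w - z‖ ^ 2 + τ * ‖w‖ := by
        linarith [sq_norm_sub_norm_le_sq_norm_sub w z]

section NormedSpace

variable {E : Type*} [SeminormedAddCommGroup E] [NormedSpace ℝ E]

theorem norm_blockSoftThresh {τ : ℝ} (hτ : 0 ≤ τ) (z : E) :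
    ‖blockSoftThresh τ z‖ = max (‖z‖ - τ) 0 := by
  rw [blockSoftThresh, norm_smul, Real.norm_of_nonneg (le_max_right _ _),
    max_one_sub_div_mul_self hτ (norm_nonneg z)]

theorem norm_blockSoftThresh_sub_self {τ : ℝ} (hτ : 0 ≤ τ) (z : E) :
    ‖blockSoftThresh τ z - z‖ = |max (‖z‖ - τ) 0 - ‖z‖| := by
  have smul_sub_self (c : ℝ) : c • z - z = (c - 1) • z := by rw [sub_smul, one_smul]
  rw [blockSoftThresh, smul_sub_self, norm_smul, Real.norm_eq_abs, ← abs_norm z, ← abs_mul,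
    abs_norm, sub_one_mul, max_one_sub_div_mul_self hτ (norm_nonneg z)]

theorem half_sq_norm_blockSoftThresh_sub_add_mul_norm {τ : ℝ} (hτ : 0 ≤ τ) (z : E) :
    1 / 2 * ‖blockSoftThresh τ z - z‖ ^ 2 + τ * ‖blockSoftThresh τ z‖ = huber τ ‖z‖ := by
  rw [norm_blockSoftThresh_sub_self hτ, sq_abs, norm_blockSoftThresh hτ,
    half_sq_sub_add_mul_max_sub_eq_huber]

end NormedSpace

theorem blockSoftThresh_infValue_general {E : Type*} [NormedAddCommGroup E]
    [InnerProductSpace ℝ E] (τ : ℝ) (hτ : 0 < τ) (z : E) :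
    IsGLB (Set.range fun w : E => (1 / 2) * ‖w - z‖ ^ 2 + τ * ‖w‖)
      (if ‖z‖ ≤ τ then (1 / 2) * ‖z‖ ^ 2 else τ * ‖z‖ - τ ^ 2 / 2) := by
  refine IsLeast.isGLB ⟨⟨blockSoftThresh τ z, ?_⟩, ?_⟩
  · exact half_sq_norm_blockSoftThresh_sub_add_mul_norm hτ.le z
  · rintro _ ⟨w, rfl⟩
    exact huber_le_half_sq_norm_sub_add_mul_norm τ w z

/-- The optimal value of the group-lasso proximal subproblem: the infimum over `w`
of `(1/2)‖w - z‖² + τ‖w‖` equals `(1/2)‖z‖²` if `‖z‖ ≤ τ` and `τ‖z‖ - τ²/2`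
otherwise. -/
theorem blockSoftThresh_infValue {E : Type*} [NormedAddCommGroup E]
    [InnerProductSpace ℝ E] [FiniteDimensional ℝ E] (τ : ℝ) (hτ : 0 < τ) (z : E) :
    IsGLB (Set.range fun w : E => (1 / 2) * ‖w - z‖ ^ 2 + τ * ‖w‖)
      (if ‖z‖ ≤ τ then (1 / 2) * ‖z‖ ^ 2 else τ * ‖z‖ - τ ^ 2 / 2) :=
  blockSoftThresh_infValue_general τ hτ z
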